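/- Let d ≥ 1 and let Ω ⊆ ℝ^d be a nonempty bounded open set. Then there exists a constant C > 0 such that for every u ∈ C_c^∞(ℝ^d; ℝ) one has ∫_{ℝ^d} (|u(x)|² + |∇u(x)|²) dx ≤ C ( ∫_{ℝ^d} |∇u(x)|² dx + ∫_{Ω^c} |u(x)|² dx ), where Ω^c denotes the complement of Ω. -/

import Mathlib

open MeasureTheory Set

noncomputable section

abbrev Euc (d : ℕ) := EuclideanSpace ℝ (Fin d)

/-- A real-valued test function on `ℝ^d`: smooth and compactly supported. -/
def IsTest {d : ℕ} (φ : Euc d → ℝ) : Prop :=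
  ContDiff ℝ (⊤ : ℕ∞) φ ∧ HasCompactSupport φ

/-!
Let `Ω ⊆ closedBall 0 R =: B`, `L = 2R + 1` and `e` a unit vector. For `x ∈ B` the point `x + L • e`
lies outside `B`, so the fundamental theorem of calculus on `t ↦ u (x + t • e)` and
Cauchy–Schwarz give `u x ^ 2 ≤ 2 u (x + L • e) ^ 2 + 2 L ∫₀ᴸ ‖∇u (x + t • e)‖² dt`.
Integrating over `x ∈ B` and using translation invariance of Lebesgue measure yields
`∫_B u² ≤ 2 ∫_{Bᶜ} u² + 2 L² ∫ ‖∇u‖²`, and `∫_{Bᶜ} u² ≤ ∫_{Ωᶜ} u²` because `Ω ⊆ B`.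
-/

open Metric

theorem sq_setIntegral_le_measureReal_mul_setIntegral_sq {α : Type*} [MeasurableSpace α]
    {μ : Measure α} {s : Set α} (hs : μ s ≠ ⊤) {f : α → ℝ} (hf : IntegrableOn f s μ)
    (hf2 : IntegrableOn (fun x ↦ f x ^ 2) s μ) :
    (∫ x in s, f x ∂μ) ^ 2 ≤ μ.real s * ∫ x in s, f x ^ 2 ∂μ := by
  rcases eq_or_ne (μ s) 0 with h0 | h0
  · simp [Measure.restrict_eq_zero.mpr h0]
  have hpos : 0 < μ.real s := ENNReal.toReal_pos h0 hs
  have hJensen := (Even.convexOn_pow (𝕜 := ℝ) even_two).map_set_average_le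
    (continuous_pow 2).continuousOn isClosed_univ h0 hs (ae_of_all _ fun _ ↦ mem_univ _) hf hf2
  rw [setAverage_eq, setAverage_eq, smul_eq_mul, smul_eq_mul, mul_pow, inv_pow,
    ← div_eq_inv_mul, ← div_eq_inv_mul, div_le_div_iff₀ (by positivity) hpos] at hJensen
  nlinarith

theorem sq_le_two_mul_sq_add_of_hasDerivAt {g g' : ℝ → ℝ} {L : ℝ} (hL : 0 ≤ L)
    (hg : ∀ t ∈ Icc 0 L, HasDerivAt g (g' t) t) (hg' : ContinuousOn g' (Icc 0 L)) :
    g 0 ^ 2 ≤ 2 * g L ^ 2 + 2 * L * ∫ t in Ioc 0 L, g' t ^ 2 := by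
  have hint : IntegrableOn g' (Icc 0 L) := hg'.integrableOn_Icc
  have hFTC : ∫ t in Ioc 0 L, g' t = g L - g 0 := by
    rw [← intervalIntegral.integral_of_le hL]
    exact intervalIntegral.integral_eq_sub_of_hasDerivAt (by rwa [uIcc_of_le hL])
      ((intervalIntegrable_iff_integrableOn_Icc_of_le hL).2 hint)
  have hCS := sq_setIntegral_le_measureReal_mul_setIntegral_sq (by simp)
    (hint.mono_set Ioc_subset_Icc_self) ((hg'.pow 2).integrableOn_Icc.mono_set Ioc_subset_Icc_self)
  rw [hFTC, Real.volume_real_Ioc_of_le hL, sub_zero] at hCS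
  nlinarith [sq_nonneg (2 * g L - g 0)]

theorem sq_le_two_mul_sq_add_integral_fderiv {E : Type*} [NormedAddCommGroup E] [NormedSpace ℝ E]
    {v : E → ℝ} (hv : ContDiff ℝ 1 v) {e : E} (he : ‖e‖ ≤ 1) (x : E) {L : ℝ} (hL : 0 ≤ L) :
    v x ^ 2 ≤ 2 * v (x + L • e) ^ 2 + 2 * L * ∫ t in Ioc 0 L, ‖fderiv ℝ v (x + t • e)‖ ^ 2 := by
  have hD : Continuous fun t : ℝ ↦ fderiv ℝ v (x + t • e) :=
    (hv.continuous_fderiv one_ne_zero).comp (by fun_prop)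
  have hline : ∀ t : ℝ, HasDerivAt (fun t : ℝ ↦ x + t • e) e t := fun t ↦ by
    simpa using ((hasDerivAt_id t).smul_const e).const_add x
  have h1D := sq_le_two_mul_sq_add_of_hasDerivAt (g := fun t ↦ v (x + t • e))
    (g' := fun t ↦ fderiv ℝ v (x + t • e) e) hL
    (fun t _ ↦ (hv.differentiable one_ne_zero _).hasFDerivAt.comp_hasDerivAt t (hline t))
    (hD.clm_apply continuous_const).continuousOn
  simp only [zero_smul, add_zero] at h1D
  refine h1D.trans (add_le_add le_rfl (mul_le_mul_of_nonneg_left ?_ (by positivity)))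
  refine setIntegral_mono_on ((hD.clm_apply continuous_const).pow 2).integrableOn_Ioc
    (hD.norm.pow 2).integrableOn_Ioc measurableSet_Ioc fun t _ ↦ ?_
  rw [← sq_abs, ← Real.norm_eq_abs]
  gcongr
  simpa using (fderiv ℝ v (x + t • e)).le_opNorm_of_le he

theorem Continuous.integrable_sq_of_hasCompactSupport {X : Type*} [TopologicalSpace X]
    [MeasurableSpace X] [OpensMeasurableSpace X] {μ : Measure X} [IsFiniteMeasureOnCompacts μ]
    {f : X → ℝ} (hf : Continuous f) (hfc : HasCompactSupport f) :
    Integrable (fun x ↦ f x ^ 2) μ := by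
  have hfc2 : HasCompactSupport fun x ↦ f x ^ 2 := hfc.comp_left (g := fun y : ℝ ↦ y ^ 2) (by simp)
  exact (hf.pow 2).integrable_of_hasCompactSupport hfc2

theorem integrable_norm_fderiv_sq {E : Type*} [NormedAddCommGroup E] [NormedSpace ℝ E]
    [MeasurableSpace E] [OpensMeasurableSpace E] {μ : Measure E} [IsFiniteMeasureOnCompacts μ]
    {v : E → ℝ} (hv : ContDiff ℝ 1 v) (hvc : HasCompactSupport v) :
    Integrable (fun x ↦ ‖fderiv ℝ v x‖ ^ 2) μ :=
  (hv.continuous_fderiv one_ne_zero).norm.integrable_sq_of_hasCompactSupport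
    (hvc.fderiv (𝕜 := ℝ)).norm

section HaarMeasure

variable {E : Type*} [NormedAddCommGroup E] [NormedSpace ℝ E] [FiniteDimensional ℝ E]
  [MeasurableSpace E] [BorelSpace E] (μ : Measure E) [μ.IsAddHaarMeasure]

theorem integrable_comp_add_smul_restrict_prod {F : E → ℝ} (hF : Continuous F) {B : Set E}
    (hB : IsCompact B) (e : E) (a b : ℝ) :
    Integrable (fun p : E × ℝ ↦ F (p.1 + p.2 • e))
      ((μ.restrict B).prod (volume.restrict (Ioc a b))) := by
  rw [Measure.prod_restrict]
  have hFe : Continuous fun p : E × ℝ ↦ F (p.1 + p.2 • e) := by fun_prop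
  exact (hFe.continuousOn.integrableOn_compact (hB.prod isCompact_Icc)).mono_set
    (prod_mono subset_rfl Ioc_subset_Icc_self)

theorem setIntegral_setIntegral_comp_add_smul_le {F : E → ℝ} (hF : Continuous F)
    (hF0 : ∀ x, 0 ≤ F x) (hFi : Integrable F μ) {B : Set E} (hB : IsCompact B) (e : E) {L : ℝ}
    (hL : 0 ≤ L) :
    ∫ x in B, (∫ t in Ioc 0 L, F (x + t • e)) ∂μ ≤ L * ∫ x, F x ∂μ := by
  have hint := integrable_comp_add_smul_restrict_prod μ hF hB e 0 L
  rw [integral_integral_swap hint]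
  calc ∫ t in Ioc 0 L, ∫ x in B, F (x + t • e) ∂μ ≤ ∫ t in Ioc 0 L, ∫ x, F x ∂μ :=
        integral_mono hint.integral_prod_right (integrable_const _) fun t ↦
          (setIntegral_le_integral (hFi.comp_add_right _) (ae_of_all _ fun x ↦ hF0 _)).trans_eq
            (integral_add_right_eq_self F _)
    _ = L * ∫ x, F x ∂μ := by
        rw [setIntegral_const, Real.volume_real_Ioc_of_le hL, sub_zero, smul_eq_mul]

theorem setIntegral_closedBall_sq_le [Nontrivial E] {v : E → ℝ} (hv : ContDiff ℝ 1 v)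
    (hvc : HasCompactSupport v) (c : E) {R : ℝ} (hR : 0 ≤ R) :
    ∫ x in closedBall c R, v x ^ 2 ∂μ ≤
      2 * ∫ x in (closedBall c R)ᶜ, v x ^ 2 ∂μ +
        2 * (2 * R + 1) ^ 2 * ∫ x, ‖fderiv ℝ v x‖ ^ 2 ∂μ := by
  obtain ⟨e, he⟩ := exists_norm_eq E zero_le_one
  set L := 2 * R + 1
  set B := closedBall c R
  have hL : 0 ≤ L := by positivity
  have hv2 := hv.continuous.integrable_sq_of_hasCompactSupport (μ := μ) hvc
  have hDv := hv.continuous_fderiv one_ne_zero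
  have hout : ∀ x ∈ B, x + L • e ∈ Bᶜ := fun x hx ↦ by
    have hx' : ‖x - c‖ ≤ R := mem_closedBall_iff_norm.1 hx
    have htri : ‖L • e‖ ≤ ‖x + L • e - c‖ + ‖x - c‖ := by
      calc ‖L • e‖ = ‖(x + L • e - c) - (x - c)‖ := by congr 1; abel
        _ ≤ _ := norm_sub_le _ _
    rw [norm_smul, he, Real.norm_of_nonneg hL, mul_one] at htri
    rw [mem_compl_iff, mem_closedBall_iff_norm, not_le]
    linarith
  have hpointwise : ∀ x ∈ B, v x ^ 2 ≤ 2 * Bᶜ.indicator (fun y ↦ v y ^ 2) (x + L • e) +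
      2 * L * ∫ t in Ioc 0 L, ‖fderiv ℝ v (x + t • e)‖ ^ 2 := fun x hx ↦ by
    rw [indicator_of_mem (hout x hx)]
    exact sq_le_two_mul_sq_add_integral_fderiv hv he.le x hL
  have hshiftInt : Integrable (fun x ↦ Bᶜ.indicator (fun y ↦ v y ^ 2) (x + L • e)) μ :=
    (hv2.indicator measurableSet_closedBall.compl).comp_add_right _
  have hsegmentInt :
      Integrable (fun x ↦ ∫ t in Ioc 0 L, ‖fderiv ℝ v (x + t • e)‖ ^ 2) (μ.restrict B) :=
    (integrable_comp_add_smul_restrict_prod μ (hDv.norm.pow 2) (isCompact_closedBall c R) e 0 L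
      ).integral_prod_left
  calc ∫ x in B, v x ^ 2 ∂μ
      ≤ ∫ x in B, (2 * Bᶜ.indicator (fun y ↦ v y ^ 2) (x + L • e) +
          2 * L * ∫ t in Ioc 0 L, ‖fderiv ℝ v (x + t • e)‖ ^ 2) ∂μ :=
        setIntegral_mono_on hv2.integrableOn ((hshiftInt.integrableOn.const_mul 2).add
          (hsegmentInt.const_mul _)) measurableSet_closedBall hpointwise
    _ = 2 * ∫ x in B, Bᶜ.indicator (fun y ↦ v y ^ 2) (x + L • e) ∂μ +
          2 * L * ∫ x in B, (∫ t in Ioc 0 L, ‖fderiv ℝ v (x + t • e)‖ ^ 2) ∂μ := by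
        rw [integral_add (hshiftInt.integrableOn.const_mul 2) (hsegmentInt.const_mul _),
          integral_const_mul, integral_const_mul]
    _ ≤ 2 * ∫ x, Bᶜ.indicator (fun y ↦ v y ^ 2) (x + L • e) ∂μ +
          2 * L * (L * ∫ x, ‖fderiv ℝ v x‖ ^ 2 ∂μ) := by
        refine add_le_add (mul_le_mul_of_nonneg_left ?_ zero_le_two)
          (mul_le_mul_of_nonneg_left ?_ (by positivity))
        · exact setIntegral_le_integral hshiftInt
            (ae_of_all _ fun x ↦ indicator_nonneg (fun y _ ↦ sq_nonneg (v y)) _)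
        · exact setIntegral_setIntegral_comp_add_smul_le μ (hDv.norm.pow 2) (fun _ ↦ sq_nonneg _)
            (integrable_norm_fderiv_sq (μ := μ) hv hvc) (isCompact_closedBall c R) e hL
    _ = 2 * ∫ x in Bᶜ, v x ^ 2 ∂μ + 2 * L ^ 2 * ∫ x, ‖fderiv ℝ v x‖ ^ 2 ∂μ := by
        rw [integral_add_right_eq_self (fun x ↦ Bᶜ.indicator (fun y ↦ v y ^ 2) x),
          integral_indicator measurableSet_closedBall.compl]
        ring

theorem integral_sq_le_setIntegral_compl_closedBall [Nontrivial E] {v : E → ℝ}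
    (hv : ContDiff ℝ 1 v) (hvc : HasCompactSupport v) (c : E) {R : ℝ} (hR : 0 ≤ R) :
    ∫ x, v x ^ 2 ∂μ ≤
      3 * ∫ x in (closedBall c R)ᶜ, v x ^ 2 ∂μ +
        2 * (2 * R + 1) ^ 2 * ∫ x, ‖fderiv ℝ v x‖ ^ 2 ∂μ := by
  rw [← integral_add_compl measurableSet_closedBall
    (hv.continuous.integrable_sq_of_hasCompactSupport (μ := μ) hvc)]
  linarith [setIntegral_closedBall_sq_le μ hv hvc c hR]

end HaarMeasure

theorem norm_gradient_eq_norm_fderiv {F : Type*} [NormedAddCommGroup F] [InnerProductSpace ℝ F]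
    [CompleteSpace F] (u : F → ℝ) (x : F) : ‖gradient u x‖ = ‖fderiv ℝ u x‖ :=
  (InnerProductSpace.toDual ℝ F).symm.norm_map _

theorem statement0_general (d : ℕ) (hd : 1 ≤ d) (Ω : Set (Euc d))
    (hΩb : Bornology.IsBounded Ω) :
    ∃ C : ℝ, 0 < C ∧ ∀ u : Euc d → ℝ, IsTest u →
      (∫ x, (u x ^ 2 + ‖gradient u x‖ ^ 2)) ≤
        C * ((∫ x, ‖gradient u x‖ ^ 2) + ∫ x in Ωᶜ, u x ^ 2) := by
  have : Nonempty (Fin d) := ⟨⟨0, hd⟩⟩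
  obtain ⟨R, hR, hΩR⟩ := hΩb.subset_closedBall_lt 0 0
  refine ⟨2 * (2 * R + 1) ^ 2 + 3, by positivity, fun u ⟨hu, huc⟩ ↦ ?_⟩
  have hu1 : ContDiff ℝ 1 u := hu.of_le (by exact_mod_cast le_top)
  have hu2 := hu1.continuous.integrable_sq_of_hasCompactSupport (μ := volume) huc
  have hpoincare := integral_sq_le_setIntegral_compl_closedBall volume hu1 huc 0 hR.le
  have hcompl : ∫ x in (closedBall 0 R)ᶜ, u x ^ 2 ≤ ∫ x in Ωᶜ, u x ^ 2 :=
    setIntegral_mono_set hu2.integrableOn (ae_of_all _ fun _ ↦ sq_nonneg _)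
      (compl_subset_compl.2 hΩR).eventuallyLE
  simp only [norm_gradient_eq_norm_fderiv]
  rw [integral_add hu2 (integrable_norm_fderiv_sq hu1 huc)]
  have hgrad : 0 ≤ ∫ x, ‖fderiv ℝ u x‖ ^ 2 := integral_nonneg fun x ↦ sq_nonneg _
  have hout : 0 ≤ ∫ x in Ωᶜ, u x ^ 2 := integral_nonneg fun x ↦ sq_nonneg _
  nlinarith

/-- Poincaré-type inequality: for a nonempty bounded open set `Ω ⊆ ℝ^d`, the full `H¹` norm of a
compactly supported smooth function is controlled by the gradient term together with the `L²` norm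
on the complement of `Ω`. -/
theorem statement0 (d : ℕ) (hd : 1 ≤ d) (Ω : Set (Euc d)) (hΩo : IsOpen Ω)
    (hΩb : Bornology.IsBounded Ω) (hΩne : Ω.Nonempty) :
    ∃ C : ℝ, 0 < C ∧ ∀ u : Euc d → ℝ, IsTest u →
      (∫ x, (u x ^ 2 + ‖gradient u x‖ ^ 2)) ≤
        C * ((∫ x, ‖gradient u x‖ ^ 2) + ∫ x in Ωᶜ, u x ^ 2) :=
  statement0_general d hd Ω hΩb
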